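/- arXiv:2601.10670 — 2 statements merged into one kernel-verified Lean document; each statement's English description precedes it below -/
import Mathlib

section
/- Let ℓ ≥ 2, let ρ_{ℓ,ℓ−1}: GL₂(𝔬_ℓ) → GL₂(𝔬_{ℓ−1}) be the reduction homomorphism and K := ker(ρ_{ℓ,ℓ−1}). Let σ be an irreducible finite-dimensional complex representation of GL₂(𝔬_ℓ) such that every element of K acts in σ as a scalar operator (i.e., σ is non-regular). Then the character χ_σ is real-valued if and only if there exists an irreducible complex representation σ' of GL₂(𝔬_{ℓ−1}) with real-valued character such that σ ≅ σ' ∘ ρ_{ℓ,ℓ−1}. -/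
open Matrix

/-- Reduction map `O/(π)^ℓ → O/(π)^i` for `i ≤ ℓ`. -/
noncomputable def redq (O : Type) [CommRing O] (π : O) {i ℓ : ℕ} (h : i ≤ ℓ) :
    O ⧸ Ideal.span {π} ^ ℓ →+* O ⧸ Ideal.span {π} ^ i :=
  Ideal.Quotient.factor (Ideal.pow_le_pow_right h)

/-- Irreducibility of a complex representation. -/
def RepIrred {G V : Type} [Group G] [AddCommGroup V] [Module ℂ V]
    (σ : Representation ℂ G V) : Prop :=
  Nontrivial V ∧
    ∀ W : Submodule ℂ V, (∀ g : G, ∀ v ∈ W, σ g v ∈ W) → W = ⊥ ∨ W = ⊤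

/-! Write `p` for the residue characteristic and `K` for the kernel of reduction. An element of
`K` is `1 + M` with `M * M = 0` and `p • M = 0`, because `𝔭 ^ (2(ℓ - 1)) ⊆ 𝔭 ^ ℓ` and `p ∈ 𝔭`;
so `K` has exponent `p`. If `χ_σ` is real, the scalar by which an element of `K` acts is a real
`p`-th root of unity, hence `1` since `p` is odd. Thus `σ` factors through the reduction map,
which is surjective on `GL₂` because units lift along the nilpotent extension `𝔬_ℓ → 𝔬_{ℓ-1}`;
an intertwining isomorphism preserves traces, giving both directions. -/

lemma one_add_pow_of_mul_self_eq_zero {R : Type*} [Semiring R] {M : R} (hM : M * M = 0) (n : ℕ) :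
    (1 + M) ^ n = 1 + n • M := by
  induction n with
  | zero => simp
  | succ n ih =>
      rw [pow_succ, ih, add_mul, one_mul, smul_mul_assoc, mul_add, mul_one, hM, add_zero,
        succ_nsmul]
      abel

lemma Complex.eq_one_of_pow_eq_one_of_im_eq_zero {c : ℂ} {p : ℕ} (hp : Odd p) (hc : c ^ p = 1)
    (him : c.im = 0) : c = 1 := by
  have hre : (c.re : ℂ) = c := Complex.ext rfl him.symm
  have hpow : c.re ^ p = 1 ^ p := by
    rw [one_pow]
    exact_mod_cast hre ▸ hc
  rw [← hre, hp.strictMono_pow.injective hpow, Complex.ofReal_one]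

namespace Matrix.GeneralLinearGroup

variable {n R S : Type*} [Fintype n] [DecidableEq n] [CommRing R] [CommRing S] {f : R →+* S}

lemma map_surjective (hf : Function.Surjective f) [IsLocalHom f] :
    Function.Surjective (map (n := n) f) := by
  intro h
  obtain ⟨A, hA⟩ : ∃ A : Matrix n n R, A.map f = h := ⟨fun i j => (hf (h i j)).choose,
    Matrix.ext fun i j => (hf (h i j)).choose_spec⟩
  have hdet : IsUnit A.det := by
    refine isUnit_of_map_unit f _ ?_
    rw [RingHom.map_det, RingHom.mapMatrix_apply, hA]
    exact (Matrix.isUnit_iff_isUnit_det _).mp h.isUnit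
  obtain ⟨g, hg⟩ := (Matrix.isUnit_iff_isUnit_det A).mpr hdet
  refine ⟨g, Units.ext ?_⟩
  change f.mapMatrix (g : Matrix n n R) = h
  rw [RingHom.mapMatrix_apply, hg, hA]

lemma pow_eq_one_of_mem_ker_map {p : ℕ}
    (hsq : ∀ x ∈ RingHom.ker f, ∀ y ∈ RingHom.ker f, x * y = 0)
    (hp : ∀ x ∈ RingHom.ker f, (p : R) * x = 0) {g : GL n R} (hg : g ∈ (map f).ker) :
    g ^ p = 1 := by
  have hgf : (g : Matrix n n R).map f = 1 := congrArg Units.val (MonoidHom.mem_ker.mp hg)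
  have hker : ∀ i j, ((g : Matrix n n R) - 1) i j ∈ RingHom.ker f := fun i j => by
    rw [RingHom.mem_ker, ← Matrix.map_apply (f := f), Matrix.map_sub _ (map_sub f), hgf,
      Matrix.map_one _ f.map_zero f.map_one, sub_self, Matrix.zero_apply]
  have hM2 : ((g : Matrix n n R) - 1) * ((g : Matrix n n R) - 1) = 0 := by
    ext i j
    exact Finset.sum_eq_zero fun k _ => hsq _ (hker i k) _ (hker k j)
  have hpM : p • ((g : Matrix n n R) - 1) = 0 := by
    ext i j
    simpa only [Matrix.smul_apply, nsmul_eq_mul, Matrix.zero_apply] using hp _ (hker i j)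
  ext1
  rw [Units.val_pow_eq_pow_val, ← add_sub_cancel (1 : Matrix n n R) (g : Matrix n n R),
    one_add_pow_of_mul_self_eq_zero hM2, hpM, add_zero, Units.val_one]

end Matrix.GeneralLinearGroup

lemma IsLocalRing.natCast_ringChar_residueField_mem_maximalIdeal (R : Type*) [CommRing R]
    [IsLocalRing R] : (ringChar (ResidueField R) : R) ∈ maximalIdeal R := by
  rw [← residue_eq_zero_iff, map_natCast, ringChar.Nat.cast_ringChar]

namespace Ideal.Quotient

variable {O : Type*} [CommRing O] (I : Ideal O) {i ℓ : ℕ}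

lemma map_pow_mul_map_pow_eq_bot {j : ℕ} (h : ℓ ≤ i + j) :
    (I ^ i).map (mk (I ^ ℓ)) * (I ^ j).map (mk (I ^ ℓ)) = ⊥ := by
  rw [← Ideal.map_mul, ← pow_add, eq_bot_iff, ← map_quotient_self (I ^ ℓ)]
  exact Ideal.map_mono (Ideal.pow_le_pow_right h)

lemma isLocalHom_factor_pow (hi : i ≠ 0) (h : i ≤ ℓ) :
    IsLocalHom (factor (Ideal.pow_le_pow_right (I := I) h)) := by
  refine ⟨fun x hx => ?_⟩
  obtain ⟨a, rfl⟩ := mk_surjective x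
  rw [factor_mk, isUnit_mk_pow_iff_isUnit_mk I hi] at hx
  rwa [isUnit_mk_pow_iff_isUnit_mk I (by omega)]

lemma mul_eq_zero_of_mem_ker_factor_pow (h : i ≤ ℓ) (hℓ : ℓ ≤ i + i) {x y : O ⧸ I ^ ℓ}
    (hx : x ∈ RingHom.ker (factor (Ideal.pow_le_pow_right (I := I) h)))
    (hy : y ∈ RingHom.ker (factor (Ideal.pow_le_pow_right (I := I) h))) : x * y = 0 := by
  rw [factor_ker] at hx hy
  have hxy := Ideal.mul_mem_mul hx hy
  rwa [map_pow_mul_map_pow_eq_bot I hℓ, Ideal.mem_bot] at hxy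

lemma mk_mul_eq_zero_of_mem_ker_factor_pow (h : i ≤ ℓ) (hℓ : ℓ ≤ 1 + i) {a : O} (ha : a ∈ I)
    {x : O ⧸ I ^ ℓ} (hx : x ∈ RingHom.ker (factor (Ideal.pow_le_pow_right (I := I) h))) :
    mk (I ^ ℓ) a * x = 0 := by
  rw [factor_ker] at hx
  have ha' : mk (I ^ ℓ) a ∈ (I ^ 1).map (mk (I ^ ℓ)) := Ideal.mem_map_of_mem _ (by rwa [pow_one])
  have hax := Ideal.mul_mem_mul ha' hx
  rwa [map_pow_mul_map_pow_eq_bot I hℓ, Ideal.mem_bot] at hax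

end Ideal.Quotient

section Representation

variable {G H V W : Type} [Group G] [Group H] [AddCommGroup V] [Module ℂ V] [AddCommGroup W]
  [Module ℂ W] {σ : Representation ℂ G V} {τ : Representation ℂ H W}

lemma RepIrred.of_intertwining (hσ : RepIrred σ) (F : G → H) (e : V ≃ₗ[ℂ] W)
    (he : ∀ g v, e (σ g v) = τ (F g) (e v)) : RepIrred τ := by
  have : Nontrivial V := hσ.1
  refine ⟨e.symm.nontrivial, fun U hU => ?_⟩
  have hinv : ∀ g, ∀ v ∈ U.comap (e : V →ₗ[ℂ] W), σ g v ∈ U.comap (e : V →ₗ[ℂ] W) := by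
    intro g v hv
    simpa only [Submodule.mem_comap, LinearEquiv.coe_coe, he] using hU (F g) _ hv
  have hmap := Submodule.map_comap_eq_of_surjective e.surjective U
  rcases hσ.2 _ hinv with h | h
  · left
    rw [← hmap, h, Submodule.map_bot]
  · right
    rw [← hmap, h, Submodule.map_top, LinearEquiv.range]

lemma Representation.trace_eq_of_intertwining {F : G → H} (e : V ≃ₗ[ℂ] W)
    (he : ∀ g v, e (σ g v) = τ (F g) (e v)) (g : G) :
    LinearMap.trace ℂ V (σ g) = LinearMap.trace ℂ W (τ (F g)) := by
  have hconj : σ g = e.symm.conj (τ (F g)) := by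
    ext v
    rw [LinearEquiv.conj_apply_apply, LinearEquiv.symm_symm, ← he, LinearEquiv.symm_apply_apply]
  rw [hconj, LinearMap.trace_conj']

lemma Representation.exists_intertwining_of_ker_le [FiniteDimensional ℂ V] {F : G →* H}
    (hF : Function.Surjective F) (σ : Representation ℂ G V) (hker : F.ker ≤ σ.ker) :
    ∃ (n : ℕ) (τ : Representation ℂ H (Fin n → ℂ)) (e : V ≃ₗ[ℂ] (Fin n → ℂ)),
      ∀ g v, e (σ g v) = τ (F g) (e v) := by
  let e := (Module.finBasis ℂ V).equivFun
  let σ₀ : H →* Module.End ℂ V := (QuotientGroup.lift F.ker σ hker).comp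
    (QuotientGroup.quotientKerEquivOfSurjective F hF).symm.toMonoidHom
  have hσ₀ : ∀ g, σ₀ (F g) = σ g := fun g => by
    have hsymm : (QuotientGroup.quotientKerEquivOfSurjective F hF).symm (F g) = g :=
      (MulEquiv.symm_apply_eq _).mpr rfl
    simp only [σ₀, MonoidHom.comp_apply, MulEquiv.coe_toMonoidHom, hsymm, QuotientGroup.lift_mk]
  refine ⟨_, (e.conjAlgEquiv ℂ).toAlgHom.toMonoidHom.comp σ₀, e, fun g v => ?_⟩
  simp [hσ₀, LinearEquiv.conjAlgEquiv_apply]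

lemma Representation.map_eq_one_of_eq_smul_id [FiniteDimensional ℂ V] [Nontrivial V] {g : G}
    {p : ℕ} (hp : Odd p) (hg : g ^ p = 1) {c : ℂ} (hc : σ g = c • LinearMap.id)
    (hre : (LinearMap.trace ℂ V (σ g)).im = 0) : σ g = 1 := by
  have hcp : c ^ p = 1 := by
    have h : algebraMap ℂ (Module.End ℂ V) (c ^ p) = algebraMap ℂ _ 1 := by
      rw [map_pow, map_one, Module.algebraMap_end_eq_smul_id, ← hc, ← map_pow, hg, map_one]
    exact (algebraMap ℂ (Module.End ℂ V)).injective h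
  have him : c.im = 0 := by
    rw [hc, map_smul, LinearMap.trace_id, smul_eq_mul, Complex.mul_im, Complex.natCast_re,
      Complex.natCast_im, mul_zero, zero_add] at hre
    exact (mul_eq_zero.mp hre).resolve_right (Nat.cast_ne_zero.mpr Module.finrank_pos.ne')
  rw [hc, Complex.eq_one_of_pow_eq_one_of_im_eq_zero hp hcp him, one_smul, Module.End.one_eq_id]

end Representation

theorem nonregular_real_characters_GL2_general
    (O : Type) [CommRing O] [IsDomain O] [IsDiscreteValuationRing O]
    (π : O) (hπ : IsLocalRing.maximalIdeal O = Ideal.span {π})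
    (hodd : Odd (ringChar (IsLocalRing.ResidueField O)))
    (ℓ : ℕ) (hℓ : 2 ≤ ℓ)
    (V : Type) [AddCommGroup V] [Module ℂ V] [FiniteDimensional ℂ V]
    (σ : Representation ℂ (GL (Fin 2) (O ⧸ Ideal.span {π} ^ ℓ)) V)
    (hirr : RepIrred σ)
    -- σ is non-regular: every element of K = ker(ρ_{ℓ,ℓ-1}) acts as a scalar
    (hnonreg : ∀ g ∈ (GeneralLinearGroup.map (redq O π (Nat.sub_le ℓ 1))).ker,
      ∃ c : ℂ, σ g = c • (LinearMap.id : V →ₗ[ℂ] V)) :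
    (∀ g, (LinearMap.trace ℂ V (σ g)).im = 0) ↔
      ∃ (n : ℕ) (σ' : Representation ℂ (GL (Fin 2) (O ⧸ Ideal.span {π} ^ (ℓ - 1)))
          (Fin n → ℂ)),
        RepIrred σ' ∧
        (∀ g', (LinearMap.trace ℂ (Fin n → ℂ) (σ' g')).im = 0) ∧
        ∃ e : V ≃ₗ[ℂ] (Fin n → ℂ), ∀ g v,
          e (σ g v) = σ' (GeneralLinearGroup.map (redq O π (Nat.sub_le ℓ 1)) g) (e v) := by
  set F := GeneralLinearGroup.map (n := Fin 2) (redq O π (Nat.sub_le ℓ 1))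
  have : IsLocalHom (redq O π (Nat.sub_le ℓ 1)) :=
    Ideal.Quotient.isLocalHom_factor_pow _ (by omega) (Nat.sub_le ℓ 1)
  have hF : Function.Surjective F :=
    GeneralLinearGroup.map_surjective (Ideal.Quotient.factor_surjective _)
  have hpI : (ringChar (IsLocalRing.ResidueField O) : O) ∈ Ideal.span {π} :=
    hπ ▸ IsLocalRing.natCast_ringChar_residueField_mem_maximalIdeal O
  have horder : ∀ g ∈ F.ker, g ^ ringChar (IsLocalRing.ResidueField O) = 1 := fun g =>
    GeneralLinearGroup.pow_eq_one_of_mem_ker_map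
      (fun x hx y hy =>
        Ideal.Quotient.mul_eq_zero_of_mem_ker_factor_pow _ (Nat.sub_le ℓ 1) (by omega) hx hy)
      (fun x hx => by
        simpa only [map_natCast] using
          Ideal.Quotient.mk_mul_eq_zero_of_mem_ker_factor_pow _ (Nat.sub_le ℓ 1) (by omega) hpI hx)
  have : Nontrivial V := hirr.1
  constructor
  · intro hre
    have hker : F.ker ≤ σ.ker := fun g hg => by
      obtain ⟨c, hc⟩ := hnonreg g hg
      exact σ.map_eq_one_of_eq_smul_id hodd (horder g hg) hc (hre g)
    obtain ⟨n, τ, e, he⟩ := σ.exists_intertwining_of_ker_le hF hker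
    refine ⟨n, τ, hirr.of_intertwining F e he, fun h => ?_, e, he⟩
    obtain ⟨g, rfl⟩ := hF h
    rw [← Representation.trace_eq_of_intertwining e he]
    exact hre g
  · rintro ⟨n, τ, -, hre, e, he⟩ g
    rw [Representation.trace_eq_of_intertwining e he]
    exact hre _

theorem nonregular_real_characters_GL2
    (O : Type) [CommRing O] [IsDomain O] [IsDiscreteValuationRing O]
    [IsAdicComplete (IsLocalRing.maximalIdeal O) O]
    (π : O) (hπ : IsLocalRing.maximalIdeal O = Ideal.span {π})
    [Finite (IsLocalRing.ResidueField O)]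
    (hodd : Odd (ringChar (IsLocalRing.ResidueField O)))
    (ℓ : ℕ) (hℓ : 2 ≤ ℓ)
    (V : Type) [AddCommGroup V] [Module ℂ V] [FiniteDimensional ℂ V]
    (σ : Representation ℂ (GL (Fin 2) (O ⧸ Ideal.span {π} ^ ℓ)) V)
    (hirr : RepIrred σ)
    -- σ is non-regular: every element of K = ker(ρ_{ℓ,ℓ-1}) acts as a scalar
    (hnonreg : ∀ g ∈ (GeneralLinearGroup.map (redq O π (Nat.sub_le ℓ 1))).ker,
      ∃ c : ℂ, σ g = c • (LinearMap.id : V →ₗ[ℂ] V)) :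
    (∀ g, (LinearMap.trace ℂ V (σ g)).im = 0) ↔
      ∃ (n : ℕ) (σ' : Representation ℂ (GL (Fin 2) (O ⧸ Ideal.span {π} ^ (ℓ - 1)))
          (Fin n → ℂ)),
        RepIrred σ' ∧
        (∀ g', (LinearMap.trace ℂ (Fin n → ℂ) (σ' g')).im = 0) ∧
        ∃ e : V ≃ₗ[ℂ] (Fin n → ℂ), ∀ g v,
          e (σ g v) = σ' (GeneralLinearGroup.map (redq O π (Nat.sub_le ℓ 1)) g) (e v) :=
  nonregular_real_characters_GL2_general O π hπ hodd ℓ hℓ V σ hirr hnonreg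
end

section
/- Let m ≥ 1 and let A ∈ M₂(𝔬_m) be a matrix whose entrywise reduction Ā ∈ M₂(𝗄) modulo π is not a scalar matrix. Let C := C_{GL₂(𝔬_m)}(A) be the centralizer of A in GL₂(𝔬_m) and D := det(C) ≤ 𝔬_m^× its image under the determinant. If the characteristic polynomial of Ā either has two distinct roots in 𝗄 or is irreducible over 𝗄, then D = 𝔬_m^×; if Ā has a repeated eigenvalue in 𝗄 (and is non-scalar), then D is a subgroup of index 2 in 𝔬_m^×. -/
/-!
Since `Ā` is not scalar, one of `A₀₁`, `A₁₀`, `A₀₀ - A₁₁` is a unit, and then every matrix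
commuting with `A` is of the form `x + yA`. Hence `det C` consists of the unit values of the
norm form `x² + tr(A) xy + det(A) y²`; completing the square (`2` is invertible), these are the
units `w` with `4w = x² - Δy²`, where `Δ` is the discriminant of `A`. The hypotheses on the
characteristic polynomial of `Ā` say that `Δ` is a unit, resp. that `Δ̄ = 0`.
If `Δ` is a unit, every element of the finite field `𝗄` has the form `a² - Δ̄b²`, and Hensel's
lemma lifts such a representation of `4w̄`. If `Δ̄ = 0`, then `4w` is a value iff `w̄` is a
square, so `det C` is the preimage of the squares of `𝗄ˣ`, a subgroup of index `2`.
-/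

open Matrix Polynomial

/-- The centralizer of a matrix `A` inside `GL₂(R)`. -/
def matCentralizer (R : Type) [CommRing R] (A : Matrix (Fin 2) (Fin 2) R) :
    Subgroup (GL (Fin 2) R) where
  carrier := {g | (g : Matrix (Fin 2) (Fin 2) R) * A = A * g}
  one_mem' := by
    show Commute ((1 : GL (Fin 2) R) : Matrix (Fin 2) (Fin 2) R) A
    rw [Units.val_one]
    exact Commute.one_left A
  mul_mem' := by
    intro a b ha hb
    show Commute ((↑(a * b) : Matrix (Fin 2) (Fin 2) R)) A
    rw [Units.val_mul]
    exact Commute.mul_left ha hb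
  inv_mem' := by
    intro a ha
    exact Commute.units_inv_left ha

lemma exists_eq_smul_of_mul_eq_mul {R ι : Type*} [CommRing R] {u v : ι → R} {i : ι}
    (hu : IsUnit (u i)) (h : ∀ j, u i * v j = u j * v i) : ∃ y : R, v = y • u := by
  refine ⟨hu.unit⁻¹ * v i, funext fun j => ?_⟩
  rw [Pi.smul_apply, smul_eq_mul, mul_right_comm, mul_assoc, ← h j, ← mul_assoc,
    IsUnit.val_inv_mul, one_mul]

namespace Matrix

variable {R : Type*} [CommRing R]

lemma exists_eq_smul_one_add_smul_of_commute {A B : Matrix (Fin 2) (Fin 2) R}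
    (hA : IsUnit (A 0 1) ∨ IsUnit (A 1 0) ∨ IsUnit (A 0 0 - A 1 1)) (hAB : Commute B A) :
    ∃ x y : R, B = x • (1 : Matrix (Fin 2) (Fin 2) R) + y • A := by
  have entry (i j : Fin 2) := congrFun (congrFun hAB.eq i) j
  simp only [mul_apply, Fin.sum_univ_two] at entry
  -- commuting with `A` says that these two vectors are proportional
  set u : Fin 3 → R := ![A 0 1, A 1 0, A 0 0 - A 1 1]
  set v : Fin 3 → R := ![B 0 1, B 1 0, B 0 0 - B 1 1]
  have proportional : ∀ i j, u i * v j = u j * v i := by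
    have := entry 0 0; have := entry 0 1; have := entry 1 0
    intro i j
    fin_cases i <;> fin_cases j <;> simp [u, v] <;> grind
  obtain ⟨i, hi⟩ : ∃ i, IsUnit (u i) := by
    rcases hA with h | h | h
    exacts [⟨0, h⟩, ⟨1, h⟩, ⟨2, h⟩]
  obtain ⟨y, hy⟩ := exists_eq_smul_of_mul_eq_mul hi (proportional i)
  have h01 : B 0 1 = y * A 0 1 := by simpa [u, v] using congrFun hy 0
  have h10 : B 1 0 = y * A 1 0 := by simpa [u, v] using congrFun hy 1
  have h2 : B 0 0 - B 1 1 = y * (A 0 0 - A 1 1) := by simpa [u, v] using congrFun hy 2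
  refine ⟨B 1 1 - y * A 1 1, y, ?_⟩
  ext i j
  fin_cases i <;> fin_cases j <;> simp [h01, h10]
  linear_combination h2

lemma det_smul_one_add_smul (A : Matrix (Fin 2) (Fin 2) R) (x y : R) :
    (x • (1 : Matrix (Fin 2) (Fin 2) R) + y • A).det =
      x ^ 2 + A.trace * x * y + A.det * y ^ 2 := by
  simp [det_fin_two, trace_fin_two]
  ring

end Matrix

section Centralizer

variable {R : Type} [CommRing R]

lemma mem_map_det_matCentralizer_iff {A : Matrix (Fin 2) (Fin 2) R}
    (hA : IsUnit (A 0 1) ∨ IsUnit (A 1 0) ∨ IsUnit (A 0 0 - A 1 1)) (w : Rˣ) :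
    w ∈ (matCentralizer R A).map GeneralLinearGroup.det ↔
      ∃ x y : R, x ^ 2 + A.trace * x * y + A.det * y ^ 2 = w := by
  constructor
  · rintro ⟨g, hg, rfl⟩
    obtain ⟨x, y, hxy⟩ := exists_eq_smul_one_add_smul_of_commute hA hg
    exact ⟨x, y, by rw [← A.det_smul_one_add_smul, ← hxy, GeneralLinearGroup.val_det_apply]⟩
  · rintro ⟨x, y, hxy⟩
    rw [← A.det_smul_one_add_smul] at hxy
    refine ⟨GeneralLinearGroup.mk'' _ (hxy ▸ w.isUnit), ?_, Units.ext ?_⟩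
    · exact ((Commute.one_left A).smul_left x).add_left ((Commute.refl A).smul_left y)
    · simpa using hxy

lemma exists_sq_add_mul_add_eq_iff (h2 : IsUnit (2 : R)) (t d w : R) :
    (∃ x y : R, x ^ 2 + t * x * y + d * y ^ 2 = w) ↔
      ∃ x y : R, x ^ 2 - (t ^ 2 - 4 * d) * y ^ 2 = 4 * w := by
  constructor
  · rintro ⟨x, y, rfl⟩
    exact ⟨2 * x + t * y, y, by ring⟩
  · rintro ⟨x, y, hxy⟩
    obtain ⟨h, hh⟩ := h2.exists_right_inv
    refine ⟨h * (x - t * y), y, (h2.mul h2).mul_left_cancel ?_⟩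
    linear_combination hxy + (x - t * y) * (2 * h * (x - t * y) + t * y + x) * hh

lemma mem_map_det_matCentralizer_iff_discr {A : Matrix (Fin 2) (Fin 2) R}
    (hA : IsUnit (A 0 1) ∨ IsUnit (A 1 0) ∨ IsUnit (A 0 0 - A 1 1)) (h2 : IsUnit (2 : R))
    (w : Rˣ) :
    w ∈ (matCentralizer R A).map GeneralLinearGroup.det ↔
      ∃ x y : R, x ^ 2 - A.discr * y ^ 2 = 4 * w := by
  rw [mem_map_det_matCentralizer_iff hA, exists_sq_add_mul_add_eq_iff h2, discr_fin_two]

end Centralizer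

lemma FiniteField.exists_sq_sub_mul_sq_eq {K : Type*} [Field K] [Finite K] (hK : ringChar K ≠ 2)
    {e : K} (he : e ≠ 0) (c : K) : ∃ a b : K, a ^ 2 - e * b ^ 2 = c := by
  have := Fintype.ofFinite K
  obtain ⟨a, b, hab⟩ := exists_root_sum_quadratic (f := X ^ 2 - C c) (g := C (-e) * X ^ 2)
    (degree_X_pow_sub_C (by norm_num) c) (degree_C_mul_X_pow 2 (neg_ne_zero.2 he))
    (odd_card_of_char_ne_two hK)
  refine ⟨a, b, ?_⟩
  simp only [eval_sub, eval_pow, eval_X, eval_C, eval_mul] at hab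
  linear_combination hab

lemma Matrix.discr_eq_zero_iff {K : Type*} [Field K] (h2 : (2 : K) ≠ 0)
    (M : Matrix (Fin 2) (Fin 2) K) : M.discr = 0 ↔ ∃ a, M.charpoly = (X - C a) ^ 2 := by
  rw [discr_fin_two, charpoly_fin_two]
  constructor
  · intro h
    obtain ⟨t, ht⟩ : ∃ t, M.trace = 2 * t := ⟨M.trace / 2, by field_simp⟩
    rw [ht] at h
    have hdet : M.det = t ^ 2 :=
      (mul_left_cancel₀ (pow_ne_zero 2 h2) (by linear_combination h)).symm
    refine ⟨t, ?_⟩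
    rw [ht, hdet, map_mul, map_pow, map_ofNat]
    ring
  · rintro ⟨a, h⟩
    rw [show (X - C a) ^ 2 = X ^ 2 - C (2 * a) * X + C (a ^ 2) by
      rw [map_mul, map_pow, map_ofNat]; ring] at h
    have h1 := congrArg (coeff · 1) h
    have h0 := congrArg (coeff · 0) h
    simp [coeff_X, coeff_C, -map_pow] at h1 h0
    linear_combination (M.trace + 2 * a) * h1 - 4 * h0

lemma Matrix.discr_ne_zero_of_two_roots_or_irreducible {K : Type*} [Field K] (h2 : (2 : K) ≠ 0)
    {M : Matrix (Fin 2) (Fin 2) K}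
    (h : (∃ a b, a ≠ b ∧ M.charpoly.IsRoot a ∧ M.charpoly.IsRoot b) ∨ Irreducible M.charpoly) :
    M.discr ≠ 0 := by
  rw [Ne, discr_eq_zero_iff h2]
  rintro ⟨c, hc⟩
  rw [hc] at h
  rcases h with ⟨a, b, hab, ha, hb⟩ | h
  · simp [sub_eq_zero] at ha hb
    exact hab (ha.trans hb.symm)
  · exact not_irreducible_pow (by norm_num) h

lemma Matrix.discr_map_fin_two {R S : Type*} [CommRing R] [CommRing S] (f : R →+* S)
    (A : Matrix (Fin 2) (Fin 2) R) : (A.map f).discr = f A.discr := by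
  simp [discr_fin_two, trace_fin_two, det_fin_two, map_ofNat f]

lemma isUnit_two_of_isLocalHom {R K : Type*} [CommRing R] [Field K] (f : R →+* K)
    [IsLocalHom f] (hK : ringChar K ≠ 2) : IsUnit (2 : R) :=
  isUnit_of_map_unit f 2 (by rw [map_ofNat]; exact (Ring.two_ne_zero hK).isUnit)

section ResidueMap

variable {R K : Type*} [CommRing R] [Field K] (f : R →+* K) [IsLocalHom f]

lemma isUnit_entry_of_not_exists_map_eq_smul_one {A : Matrix (Fin 2) (Fin 2) R}
    (hA : ¬ ∃ c : K, A.map f = c • (1 : Matrix (Fin 2) (Fin 2) K)) :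
    IsUnit (A 0 1) ∨ IsUnit (A 1 0) ∨ IsUnit (A 0 0 - A 1 1) := by
  have map_eq_zero (x : R) (hx : ¬ IsUnit x) : f x = 0 :=
    not_not.1 fun h => hx (isUnit_of_map_unit f x (isUnit_iff_ne_zero.2 h))
  by_contra! h
  obtain ⟨h01, h10, hdiag⟩ := h
  refine hA ⟨f (A 0 0), ?_⟩
  have h11 : f (A 1 1) = f (A 0 0) := by
    have := map_eq_zero _ hdiag
    rw [map_sub] at this
    linear_combination -this
  ext i j
  fin_cases i <;> fin_cases j <;> simp [map_eq_zero _ h01, map_eq_zero _ h10, h11]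

variable {f}

lemma exists_sq_sub_mul_sq_eq_of_map_ne_zero [Finite K] (hK : ringChar K ≠ 2)
    (hf : Function.Surjective f) (hsq : ∀ u : R, IsUnit u → IsSquare (f u) → IsSquare u)
    {e : R} (he : f e ≠ 0) {v : R} (hv : IsUnit v) : ∃ x y : R, x ^ 2 - e * y ^ 2 = v := by
  obtain ⟨a, b, hab⟩ := FiniteField.exists_sq_sub_mul_sq_eq hK he (f v)
  by_cases ha : a = 0
  · -- then `-v e` reduces to the square `(e b)²`, and `v = -e (y / e)²` for a lift `y² = -v e`
    have heu : IsUnit e := isUnit_of_map_unit f e (isUnit_iff_ne_zero.2 he)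
    obtain ⟨e', he'⟩ := heu.exists_right_inv
    obtain ⟨y, hy⟩ := hsq (-(v * e)) (hv.mul heu).neg
      ⟨f e * b, by rw [map_neg, map_mul, ← hab, ha]; ring⟩
    exact ⟨0, y * e', by linear_combination (e * e' ^ 2) * hy + v * (e * e' + 1) * he'⟩
  · obtain ⟨y, rfl⟩ := hf b
    have hsum : f (v + e * y ^ 2) = a * a := by rw [map_add, map_mul, map_pow, ← hab]; ring
    obtain ⟨x, hx⟩ := hsq (v + e * y ^ 2)
      (isUnit_of_map_unit f _ (hsum ▸ isUnit_iff_ne_zero.2 (mul_ne_zero ha ha))) ⟨a, hsum⟩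
    exact ⟨x, y, by linear_combination -hx⟩

lemma exists_sq_sub_mul_sq_eq_four_mul_iff_of_map_eq_zero (hK : ringChar K ≠ 2)
    (hsq : ∀ u : R, IsUnit u → IsSquare (f u) → IsSquare u) {e : R} (he : f e = 0) {w : R}
    (hw : IsUnit w) : (∃ x y : R, x ^ 2 - e * y ^ 2 = 4 * w) ↔ IsSquare (f w) := by
  have h2 : (2 : K) ≠ 0 := Ring.two_ne_zero hK
  constructor
  · rintro ⟨x, y, hxy⟩
    refine ⟨f x / 2, ?_⟩
    have := congrArg f hxy
    simp only [map_sub, map_mul, map_pow, he, map_ofNat] at this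
    field_simp
    linear_combination -this
  · rintro ⟨c, hc⟩
    have h4 : IsUnit (4 * w) := (isUnit_of_map_unit f 4 (by
      rw [map_ofNat, show (4 : K) = 2 ^ 2 by norm_num]; exact (pow_ne_zero 2 h2).isUnit)).mul hw
    obtain ⟨z, hz⟩ := hsq (4 * w) h4 ⟨2 * c, by rw [map_mul, hc, map_ofNat]; ring⟩
    exact ⟨z, 0, by linear_combination -hz⟩

end ResidueMap

lemma mem_comap_range_powMonoidHom_two_iff {M K : Type*} [Monoid M] [CommGroupWithZero K]
    (f : M →* K) (w : Mˣ) :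
    w ∈ (powMonoidHom 2 : Kˣ →* Kˣ).range.comap (Units.map f) ↔ IsSquare (f w) := by
  constructor
  · rintro ⟨c, hc⟩
    exact ⟨c, by simpa [sq] using congrArg Units.val hc.symm⟩
  · rintro ⟨c, hc⟩
    have hc0 : c ≠ 0 := by rintro rfl; simpa [hc] using (w.isUnit.map f).ne_zero
    exact ⟨Units.mk0 c hc0, Units.ext (by simp [sq, hc])⟩

lemma FiniteField.index_range_powMonoidHom_two {K : Type*} [Field K] [Finite K]
    (hK : ringChar K ≠ 2) : (powMonoidHom 2 : Kˣ →* Kˣ).range.index = 2 := by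
  have := Fintype.ofFinite K
  classical
  rw [IsCyclic.index_powMonoidHom_range, Nat.card_eq_fintype_card, Fintype.card_units]
  have := odd_card_of_char_ne_two hK
  exact Nat.gcd_eq_right (by omega)

section Determinant

variable {R : Type} {K : Type*} [CommRing R] [Field K] {f : R →+* K} [IsLocalHom f]
  {A : Matrix (Fin 2) (Fin 2) R}

theorem map_det_matCentralizer_eq_top [Finite K] (hK : ringChar K ≠ 2)
    (hf : Function.Surjective f) (hsq : ∀ u : R, IsUnit u → IsSquare (f u) → IsSquare u)
    (hA : ¬ ∃ c : K, A.map f = c • (1 : Matrix (Fin 2) (Fin 2) K)) (hΔ : f A.discr ≠ 0) :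
    (matCentralizer R A).map GeneralLinearGroup.det = ⊤ := by
  have h2 := isUnit_two_of_isLocalHom f hK
  refine (Subgroup.eq_top_iff' _).2 fun w => ?_
  rw [mem_map_det_matCentralizer_iff_discr (isUnit_entry_of_not_exists_map_eq_smul_one f hA) h2]
  refine exists_sq_sub_mul_sq_eq_of_map_ne_zero hK hf hsq hΔ ?_
  rw [show (4 : R) = 2 * 2 by norm_num]
  exact (h2.mul h2).mul w.isUnit

theorem map_det_matCentralizer_eq_comap (hK : ringChar K ≠ 2)
    (hsq : ∀ u : R, IsUnit u → IsSquare (f u) → IsSquare u)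
    (hA : ¬ ∃ c : K, A.map f = c • (1 : Matrix (Fin 2) (Fin 2) K)) (hΔ : f A.discr = 0) :
    (matCentralizer R A).map GeneralLinearGroup.det =
      (powMonoidHom 2 : Kˣ →* Kˣ).range.comap (Units.map (f : R →* K)) := by
  ext w
  rw [mem_map_det_matCentralizer_iff_discr (isUnit_entry_of_not_exists_map_eq_smul_one f hA)
    (isUnit_two_of_isLocalHom f hK), mem_comap_range_powMonoidHom_two_iff]
  exact exists_sq_sub_mul_sq_eq_four_mul_iff_of_map_eq_zero hK hsq hΔ w.isUnit

theorem index_map_det_matCentralizer [Finite K] (hK : ringChar K ≠ 2)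
    (hf : Function.Surjective f) (hsq : ∀ u : R, IsUnit u → IsSquare (f u) → IsSquare u)
    (hA : ¬ ∃ c : K, A.map f = c • (1 : Matrix (Fin 2) (Fin 2) K)) (hΔ : f A.discr = 0) :
    ((matCentralizer R A).map GeneralLinearGroup.det).index = 2 := by
  rw [map_det_matCentralizer_eq_comap hK hsq hA hΔ]
  exact (Subgroup.index_comap_of_surjective _
    (IsLocalRing.surjective_units_map_of_local_ringHom f hf inferInstance)).trans
    (FiniteField.index_range_powMonoidHom_two hK)

end Determinant

lemma HenselianRing.isSquare_of_isSquare_mk {O : Type*} [CommRing O] {J : Ideal O}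
    [HenselianRing O J] (h2 : IsUnit (2 : O ⧸ J)) {v : O} (hv : IsUnit (Ideal.Quotient.mk J v))
    (hsq : IsSquare (Ideal.Quotient.mk J v)) : IsSquare v := by
  obtain ⟨c, hc⟩ := hsq
  obtain ⟨b, rfl⟩ := Ideal.Quotient.mk_surjective c
  have hb : IsUnit (Ideal.Quotient.mk J b) := isUnit_of_mul_isUnit_left (hc ▸ hv)
  have hb2 : v - b * b ∈ J := Ideal.Quotient.eq.1 (by rw [hc, map_mul])
  have hderiv : (derivative (X ^ 2 - C v)).eval b = 2 * b := by simp; ring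
  obtain ⟨a, ha, -⟩ := HenselianRing.is_henselian (I := J) (X ^ 2 - C v)
    (monic_X_pow_sub_C v two_ne_zero) b (by simpa [sq] using J.neg_mem hb2)
    (by rw [hderiv, map_mul, map_ofNat]; exact h2.mul hb)
  exact ⟨a, by simpa [sq, sub_eq_zero, eq_comm] using ha⟩

lemma Ideal.Quotient.isSquare_of_isSquare_factor {O : Type*} [CommRing O] {I J : Ideal O}
    [HenselianRing O J] (hIJ : I ≤ J) (h2 : IsUnit (2 : O ⧸ J)) {u : O ⧸ I} (hu : IsUnit u)
    (hsq : IsSquare (Ideal.Quotient.factor hIJ u)) : IsSquare u := by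
  obtain ⟨v, rfl⟩ := Ideal.Quotient.mk_surjective u
  rw [Ideal.Quotient.factor_mk] at hsq
  have hv := Ideal.Quotient.factor_mk hIJ v ▸ hu.map (Ideal.Quotient.factor hIJ)
  exact (HenselianRing.isSquare_of_isSquare_mk h2 hv hsq).map _

lemma Ideal.Quotient.isLocalHom_factor {O : Type*} [CommRing O] [IsLocalRing O] {I J : Ideal O}
    (hIJ : I ≤ J) (hJ : J ≠ ⊤) : IsLocalHom (Ideal.Quotient.factor hIJ) :=
  have := Ideal.Quotient.nontrivial_iff.2 (ne_top_of_le_ne_top hJ hIJ)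
  have := IsLocalRing.of_surjective' _ (Ideal.Quotient.mk_surjective (I := I))
  have := Ideal.Quotient.nontrivial_iff.2 hJ
  IsLocalHom.of_surjective _ (Ideal.Quotient.factor_surjective hIJ)

theorem det_of_centralizer
    (O : Type) [CommRing O] [IsDomain O] [IsDiscreteValuationRing O]
    [IsAdicComplete (IsLocalRing.maximalIdeal O) O]
    (π : O) (hπ : IsLocalRing.maximalIdeal O = Ideal.span {π})
    [Finite (IsLocalRing.ResidueField O)]
    (hodd : Odd (ringChar (IsLocalRing.ResidueField O)))
    (m : ℕ) (hm : 1 ≤ m)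
    (A : Matrix (Fin 2) (Fin 2) (O ⧸ Ideal.span {π} ^ m))
    -- the reduction of A modulo π is not a scalar matrix
    (hnonscalar : ¬ ∃ c : O ⧸ Ideal.span {π} ^ 1,
      A.map (redq O π hm) = c • (1 : Matrix (Fin 2) (Fin 2) (O ⧸ Ideal.span {π} ^ 1))) :
    -- if the characteristic polynomial of Ā has two distinct roots or is irreducible,
    -- then det(C) is the full unit group
    (((∃ a b : O ⧸ Ideal.span {π} ^ 1, a ≠ b ∧
          (A.map (redq O π hm)).charpoly.IsRoot a ∧
          (A.map (redq O π hm)).charpoly.IsRoot b) ∨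
        Irreducible (A.map (redq O π hm)).charpoly) →
      Subgroup.map (GeneralLinearGroup.det) (matCentralizer _ A) = ⊤) ∧
    -- if Ā has a repeated eigenvalue, then det(C) has index two in the unit group
    ((∃ a : O ⧸ Ideal.span {π} ^ 1,
        (A.map (redq O π hm)).charpoly = (X - C a) ^ 2) →
      (Subgroup.map (GeneralLinearGroup.det) (matCentralizer _ A)).index = 2) := by
  have hmax : Ideal.span {π} ^ 1 = IsLocalRing.maximalIdeal O := by rw [pow_one, hπ]
  have hJ : (Ideal.span {π} ^ 1).IsMaximal := hmax ▸ IsLocalRing.maximalIdeal.isMaximal O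
  let := Ideal.Quotient.field (Ideal.span {π} ^ 1)
  let e : IsLocalRing.ResidueField O ≃+* O ⧸ Ideal.span {π} ^ 1 := Ideal.quotEquivOfEq hmax.symm
  have : Finite (O ⧸ Ideal.span {π} ^ 1) := Finite.of_equiv _ e.toEquiv
  have hchar : ringChar (O ⧸ Ideal.span {π} ^ 1) = ringChar (IsLocalRing.ResidueField O) :=
    ringChar.eq_iff.2 (((e : _ →+* O ⧸ Ideal.span {π} ^ 1).charP_iff_charP _).1
      (ringChar.charP _))
  have hK : ringChar (O ⧸ Ideal.span {π} ^ 1) ≠ 2 :=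
    hchar ▸ fun h => Nat.not_odd_iff_even.2 even_two (h ▸ hodd)
  have h2 := Ring.two_ne_zero hK
  have : IsLocalHom (redq O π hm) := Ideal.Quotient.isLocalHom_factor _ hJ.ne_top
  have hf : Function.Surjective (redq O π hm) := Ideal.Quotient.factor_surjective _
  have : HenselianRing O (Ideal.span {π} ^ 1) := hmax ▸ inferInstance
  have hsq (u) (hu : IsUnit u) : IsSquare (redq O π hm u) → IsSquare u :=
    Ideal.Quotient.isSquare_of_isSquare_factor _ h2.isUnit hu
  refine ⟨fun h => ?_, fun h => ?_⟩
  · refine map_det_matCentralizer_eq_top hK hf hsq hnonscalar ?_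
    rw [← discr_map_fin_two]
    exact discr_ne_zero_of_two_roots_or_irreducible h2 h
  · refine index_map_det_matCentralizer hK hf hsq hnonscalar ?_
    rw [← discr_map_fin_two]
    exact (discr_eq_zero_iff h2 _).2 h
end
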